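/- arXiv:1702.00471 — 2 statements merged into one kernel-verified Lean document; each statement's English description precedes it below -/
import Mathlib

section
/- The number x = Σ_{k=1}^∞ ε_k/(q_1 q_2 ⋯ q_k) is rational if and only if there exist a real constant c and a strictly increasing sequence (n_k) of nonnegative integers such that σ^{n_k}(x) = c for every k (i.e., the shifts σ^n(x) take some value for infinitely many indices n). -/
/-!
Multiplying `σ^m(x)` by `Q = q_{m+1} ⋯ q_n` gives `σ^n(x)` plus a natural number. If `x = a/b`,
this makes every `b σ^n(x)` an integer in `[0, 2b]`, so the shifts take finitely many values and
one of them recurs infinitely often. Conversely, `σ^m(x) = σ^n(x) = c` with `m < n` gives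
`Q c = A + c` with `Q ≥ 2`, so `c` is rational, and then so is `x = (A' + c) / Q'`.
-/

/-- The `n`-th shift `σ^n(x) = Σ_{k=n+1}^∞ ε_k/(q_{n+1} q_{n+2} ⋯ q_k)` of the Cantor
series with bases `q` and digits `ε`; in particular `σ^0(x) = x`. -/
noncomputable def cantorShift (q ε : ℕ → ℕ) (n : ℕ) : ℝ :=
  ∑' k : ℕ, (ε (n + k + 1) : ℝ) / ∏ i ∈ Finset.Icc (n + 1) (n + k + 1), (q i : ℝ)

open Finset Filter

theorem exists_strictMono_forall_eq_of_finite_range {α : Type*} {f : ℕ → α}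
    (hf : (Set.range f).Finite) : ∃ c, ∃ φ : ℕ → ℕ, StrictMono φ ∧ ∀ k, f (φ k) = c := by
  have : Finite (Set.range f) := hf.to_subtype
  obtain ⟨⟨c, _⟩, hc⟩ := Finite.exists_infinite_fiber (Set.rangeFactorization f)
  have hfreq : ∃ᶠ n in atTop, f n = c := by
    refine Nat.frequently_atTop_iff_infinite.mpr ((Set.infinite_coe_iff.mp hc).mono ?_)
    intro n hn
    simpa [Set.rangeFactorization] using congrArg Subtype.val hn
  exact ⟨c, extraction_of_frequently_atTop hfreq⟩

section CantorSeries

variable {q ε : ℕ → ℕ}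

theorem two_pow_le_prod_Icc (hq : ∀ k, 1 ≤ k → 2 ≤ q k) (m n : ℕ) :
    2 ^ (n - m) ≤ ∏ i ∈ Icc (m + 1) n, q i := by
  calc 2 ^ (n - m) = ∏ _i ∈ Icc (m + 1) n, 2 := by rw [prod_const, Nat.card_Icc]; congr 1; omega
    _ ≤ ∏ i ∈ Icc (m + 1) n, q i :=
      prod_le_prod' fun i hi => hq i (by linarith [(mem_Icc.mp hi).1])

theorem prod_Icc_pos (hq : ∀ k, 1 ≤ k → 2 ≤ q k) (m n : ℕ) : 0 < ∏ i ∈ Icc (m + 1) n, q i :=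
  lt_of_lt_of_le (by positivity) (two_pow_le_prod_Icc hq m n)

theorem digit_mul_two_pow_le_prod (hq : ∀ k, 1 ≤ k → 2 ≤ q k) (hε : ∀ k, 1 ≤ k → ε k ≤ q k - 1)
    (n k : ℕ) : ε (n + k + 1) * 2 ^ k ≤ ∏ i ∈ Icc (n + 1) (n + k + 1), q i := by
  rw [prod_Icc_succ_top (by omega), mul_comm]
  gcongr
  · simpa using two_pow_le_prod_Icc hq n (n + k)
  · exact (hε _ (by omega)).trans (Nat.sub_le _ _)

theorem cantorShift_term_le (hq : ∀ k, 1 ≤ k → 2 ≤ q k) (hε : ∀ k, 1 ≤ k → ε k ≤ q k - 1)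
    (n k : ℕ) :
    (ε (n + k + 1) : ℝ) / ∏ i ∈ Icc (n + 1) (n + k + 1), (q i : ℝ) ≤ (1 / 2) ^ k := by
  have hpos : (0 : ℝ) < ∏ i ∈ Icc (n + 1) (n + k + 1), (q i : ℝ) := by
    exact_mod_cast prod_Icc_pos hq n (n + k + 1)
  rw [div_le_iff₀ hpos, one_div, inv_pow, inv_mul_eq_div, le_div_iff₀ (by positivity)]
  exact_mod_cast digit_mul_two_pow_le_prod hq hε n k

theorem summable_cantorShift_term (hq : ∀ k, 1 ≤ k → 2 ≤ q k) (hε : ∀ k, 1 ≤ k → ε k ≤ q k - 1)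
    (n : ℕ) :
    Summable fun k => (ε (n + k + 1) : ℝ) / ∏ i ∈ Icc (n + 1) (n + k + 1), (q i : ℝ) :=
  summable_geometric_two.of_nonneg_of_le (fun _ => by positivity)
    (cantorShift_term_le hq hε n)

theorem cantorShift_mem_Icc (hq : ∀ k, 1 ≤ k → 2 ≤ q k) (hε : ∀ k, 1 ≤ k → ε k ≤ q k - 1)
    (n : ℕ) : cantorShift q ε n ∈ Set.Icc (0 : ℝ) 2 := by
  refine ⟨tsum_nonneg fun _ => by positivity, ?_⟩
  rw [← tsum_geometric_two]
  exact (summable_cantorShift_term hq hε n).tsum_le_tsum (cantorShift_term_le hq hε n)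
    summable_geometric_two

theorem cast_mul_cantorShift (hq : ∀ k, 1 ≤ k → 2 ≤ q k) (hε : ∀ k, 1 ≤ k → ε k ≤ q k - 1)
    (n : ℕ) : (q (n + 1) : ℝ) * cantorShift q ε n = ε (n + 1) + cantorShift q ε (n + 1) := by
  have hq0 : (q (n + 1) : ℝ) ≠ 0 := by have := hq (n + 1) (by omega); positivity
  have hprod (k : ℕ) : ∏ i ∈ Icc (n + 1) (n + 1 + k + 1), (q i : ℝ)
      = q (n + 1) * ∏ i ∈ Icc (n + 1 + 1) (n + 1 + k + 1), (q i : ℝ) := by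
    rw [← mul_prod_Ioc_eq_prod_Icc (a := n + 1) (by omega), ← Icc_add_one_left_eq_Ioc]
  rw [cantorShift, (summable_cantorShift_term hq hε n).tsum_eq_zero_add, mul_add,
    ← tsum_mul_left, cantorShift]
  congr 1
  · simp [mul_div_cancel₀ _ hq0]
  · refine tsum_congr fun k => ?_
    rw [show n + (k + 1) + 1 = n + 1 + k + 1 by omega, hprod]
    field_simp

theorem exists_nat_prod_mul_cantorShift_eq (hq : ∀ k, 1 ≤ k → 2 ≤ q k)
    (hε : ∀ k, 1 ≤ k → ε k ≤ q k - 1) {m n : ℕ} (hmn : m ≤ n) :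
    ∃ A : ℕ, ((∏ i ∈ Icc (m + 1) n, q i : ℕ) : ℝ) * cantorShift q ε m = A + cantorShift q ε n := by
  induction n, hmn using Nat.le_induction with
  | base => exact ⟨0, by simp⟩
  | succ n hmn ih =>
    obtain ⟨A, hA⟩ := ih
    refine ⟨q (n + 1) * A + ε (n + 1), ?_⟩
    rw [prod_Icc_succ_top (by omega)]
    push_cast at hA ⊢
    linear_combination (q (n + 1) : ℝ) * hA + cast_mul_cantorShift hq hε n

theorem finite_range_cantorShift_of_rat (hq : ∀ k, 1 ≤ k → 2 ≤ q k)
    (hε : ∀ k, 1 ≤ k → ε k ≤ q k - 1) {a : ℚ} (ha : cantorShift q ε 0 = a) :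
    (Set.range (cantorShift q ε)).Finite := by
  have hden : (0 : ℝ) < a.den := by positivity
  refine ((Set.finite_Icc (0 : ℤ) (2 * a.den)).image fun z : ℤ => (z : ℝ) / a.den).subset ?_
  rintro _ ⟨n, rfl⟩
  obtain ⟨A, hA⟩ := exists_nat_prod_mul_cantorShift_eq hq hε (Nat.zero_le n)
  rw [ha, Rat.cast_def, zero_add] at hA
  set z : ℤ := (∏ i ∈ Icc 1 n, q i : ℕ) * a.num - a.den * A
  have hz : cantorShift q ε n = z / a.den := by
    rw [eq_div_iff hden.ne']
    field_simp at hA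
    push_cast [z] at hA ⊢
    linear_combination -hA
  obtain ⟨h0, h2⟩ := cantorShift_mem_Icc hq hε n
  rw [hz, le_div_iff₀ hden] at h0
  rw [hz, div_le_iff₀ hden] at h2
  refine ⟨z, ⟨?_, ?_⟩, hz.symm⟩
  · exact_mod_cast (by linarith : (0 : ℝ) ≤ z)
  · exact_mod_cast (by linarith : (z : ℝ) ≤ 2 * a.den)

theorem exists_rat_cantorShift_of_le (hq : ∀ k, 1 ≤ k → 2 ≤ q k)
    (hε : ∀ k, 1 ≤ k → ε k ≤ q k - 1) {m n : ℕ} (hmn : m ≤ n)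
    (hn : ∃ b : ℚ, cantorShift q ε n = b) : ∃ a : ℚ, cantorShift q ε m = a := by
  obtain ⟨b, hb⟩ := hn
  obtain ⟨A, hA⟩ := exists_nat_prod_mul_cantorShift_eq hq hε hmn
  have hQ : ((∏ i ∈ Icc (m + 1) n, q i : ℕ) : ℝ) ≠ 0 := by
    exact_mod_cast (prod_Icc_pos hq m n).ne'
  refine ⟨(A + b) / (∏ i ∈ Icc (m + 1) n, q i : ℕ), ?_⟩
  push_cast at hQ hA ⊢
  rw [eq_div_iff hQ]
  linarith

theorem exists_rat_cantorShift_of_eq (hq : ∀ k, 1 ≤ k → 2 ≤ q k)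
    (hε : ∀ k, 1 ≤ k → ε k ≤ q k - 1) {m n : ℕ} (hmn : m < n)
    (h : cantorShift q ε m = cantorShift q ε n) : ∃ a : ℚ, cantorShift q ε m = a := by
  obtain ⟨A, hA⟩ := exists_nat_prod_mul_cantorShift_eq hq hε hmn.le
  have hQ : 2 ≤ ∏ i ∈ Icc (m + 1) n, q i :=
    (Nat.le_self_pow (by omega) 2).trans (two_pow_le_prod_Icc hq m n)
  rw [← h] at hA
  refine ⟨A / ((∏ i ∈ Icc (m + 1) n, q i : ℕ) - 1), ?_⟩
  have hQ' : (2 : ℝ) ≤ (∏ i ∈ Icc (m + 1) n, q i : ℕ) := by exact_mod_cast hQ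
  push_cast at hQ' hA ⊢
  rw [eq_div_iff (by linarith)]
  linarith

end CantorSeries

/-- `x = Σ_{k=1}^∞ ε_k/(q_1 ⋯ q_k)` is rational iff the shifts `σ^n(x)`
take some constant value `c` along a strictly increasing sequence of indices `(n_k)`,
i.e. some value is attained for infinitely many indices `n`. -/
theorem cantor_rational_iff_shift_const_subseq
    (q : ℕ → ℕ) (hq : ∀ k, 1 ≤ k → 2 ≤ q k)
    (ε : ℕ → ℕ) (hε : ∀ k, 1 ≤ k → ε k ≤ q k - 1)
    (x : ℝ) (hx : x = cantorShift q ε 0) :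
    (∃ a : ℚ, x = (a : ℝ)) ↔
    (∃ c : ℝ, ∃ nk : ℕ → ℕ, StrictMono nk ∧ ∀ k, cantorShift q ε (nk k) = c) := by
  subst hx
  constructor
  · rintro ⟨a, ha⟩
    exact exists_strictMono_forall_eq_of_finite_range (finite_range_cantorShift_of_rat hq hε ha)
  · rintro ⟨c, nk, hmono, hc⟩
    exact exists_rat_cantorShift_of_le hq hε (Nat.zero_le (nk 0))
      (exists_rat_cantorShift_of_eq hq hε (hmono zero_lt_one) ((hc 0).trans (hc 1).symm))
end

section
/- Let q = min { q_n : n ≥ 1 } and fix ε ∈ {0, 1, …, q − 1}. Then the digit sequence (ε_k) satisfies σ^n(x) = x = ε/(q − 1) for all n ≥ 0 if and only if for every n ≥ 1 one has ε_n·(q − 1) = (q_n − 1)·ε, i.e., ε_n = (q_n − 1)ε/(q − 1) is a nonnegative integer for all n. -/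
/-!
The shifts satisfy `σ^n(x) = (ε_{n+1} + σ^{n+1}(x)) / q_{n+1}`, so if all shifts equal `c` then
`ε_{n+1} = c (q_{n+1} - 1)`. Conversely, digits `ε_k = c (q_k - 1)` give `c` times the series with
maximal digits `q_k - 1`, which telescopes to `1`.
-/

open Finset Filter Topology

noncomputable def cantorProd (q : ℕ → ℕ) (n k : ℕ) : ℝ :=
  ∏ i ∈ Icc (n + 1) (n + k), (q i : ℝ)

namespace cantorProd

variable {q : ℕ → ℕ} {n : ℕ}

@[simp]
lemma zero : cantorProd q n 0 = 1 := by
  simp [cantorProd]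

lemma succ (k : ℕ) : cantorProd q n (k + 1) = cantorProd q n k * q (n + k + 1) := by
  rw [cantorProd, ← add_assoc, prod_Icc_succ_top (by omega), cantorProd]

lemma succ' (k : ℕ) : cantorProd q n (k + 1) = q (n + 1) * cantorProd q (n + 1) k := by
  induction k with
  | zero => simp [cantorProd]
  | succ k ih => rw [succ, ih, succ, mul_assoc, show n + 1 + k + 1 = n + (k + 1) + 1 by ring]

lemma two_pow_le (hq : ∀ k, 1 ≤ k → 2 ≤ q k) (k : ℕ) : (2 : ℝ) ^ k ≤ cantorProd q n k := by
  induction k with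
  | zero => simp
  | succ k ih =>
    have hP : 0 ≤ cantorProd q n k := (by positivity : (0 : ℝ) ≤ 2 ^ k).trans ih
    have : (2 : ℝ) ≤ q (n + k + 1) := by exact_mod_cast hq _ (by omega)
    rw [pow_succ, succ]
    gcongr

lemma pos (hq : ∀ k, 1 ≤ k → 2 ≤ q k) (k : ℕ) : 0 < cantorProd q n k :=
  (pow_pos two_pos k).trans_le (two_pow_le hq k)

lemma tendsto_inv (hq : ∀ k, 1 ≤ k → 2 ≤ q k) :
    Tendsto (fun k ↦ (cantorProd q n k)⁻¹) atTop (𝓝 0) :=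
  tendsto_inv_atTop_zero.comp <|
    tendsto_atTop_mono (two_pow_le hq) (tendsto_pow_atTop_atTop_of_one_lt one_lt_two)

end cantorProd

variable {q ε : ℕ → ℕ}

lemma cantorShift_eq_tsum (n : ℕ) :
    cantorShift q ε n = ∑' k, (ε (n + k + 1) : ℝ) / cantorProd q n (k + 1) :=
  rfl

/-- The partial sums telescope to `1 - 1 / (q_{n+1} ⋯ q_{n+m})`. -/
lemma hasSum_sub_one_div_cantorProd (hq : ∀ k, 1 ≤ k → 2 ≤ q k) (n : ℕ) :
    HasSum (fun k ↦ ((q (n + k + 1) : ℝ) - 1) / cantorProd q n (k + 1)) 1 := by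
  have hterm (k : ℕ) : ((q (n + k + 1) : ℝ) - 1) / cantorProd q n (k + 1)
      = (cantorProd q n k)⁻¹ - (cantorProd q n (k + 1))⁻¹ := by
    have hP := cantorProd.pos hq (n := n) k
    have hqk : (0 : ℝ) < q (n + k + 1) := by have := hq (n + k + 1) (by omega); positivity
    rw [cantorProd.succ]
    field_simp
  have hq1 (k : ℕ) : (1 : ℝ) ≤ q (n + k + 1) := by
    exact_mod_cast (hq _ (by omega)).trans' one_le_two
  rw [hasSum_iff_tendsto_nat_of_nonneg
    (fun k ↦ div_nonneg (sub_nonneg.2 (hq1 k)) (cantorProd.pos hq _).le)]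
  simp only [hterm, sum_range_sub', cantorProd.zero, inv_one]
  simpa using (cantorProd.tendsto_inv hq (n := n)).const_sub 1

lemma summable_cantorShift (hq : ∀ k, 1 ≤ k → 2 ≤ q k) (hε : ∀ k, 1 ≤ k → ε k ≤ q k - 1)
    (n : ℕ) : Summable (fun k ↦ (ε (n + k + 1) : ℝ) / cantorProd q n (k + 1)) := by
  refine (hasSum_sub_one_div_cantorProd hq n).summable.of_nonneg_of_le
    (fun k ↦ div_nonneg (Nat.cast_nonneg _) (cantorProd.pos hq _).le) fun k ↦ ?_
  have hk := hε (n + k + 1) (by omega)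
  have h1 : 1 ≤ q (n + k + 1) := (hq _ (by omega)).trans' one_le_two
  gcongr
  · exact (cantorProd.pos hq _).le
  · simpa [Nat.cast_sub h1] using (Nat.cast_le (α := ℝ)).2 hk

lemma cantorShift_eq_add_div (hq : ∀ k, 1 ≤ k → 2 ≤ q k) (hε : ∀ k, 1 ≤ k → ε k ≤ q k - 1)
    (n : ℕ) :
    cantorShift q ε n = ((ε (n + 1) : ℝ) + cantorShift q ε (n + 1)) / q (n + 1) := by
  have hqn : (0 : ℝ) < q (n + 1) := by have := hq (n + 1) (by omega); positivity
  have htail (k : ℕ) : (ε (n + (k + 1) + 1) : ℝ) / cantorProd q n (k + 1 + 1)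
      = (ε (n + 1 + k + 1) : ℝ) / cantorProd q (n + 1) (k + 1) / q (n + 1) := by
    rw [cantorProd.succ' (k + 1), div_div, mul_comm, show n + (k + 1) + 1 = n + 1 + k + 1 by ring]
  rw [cantorShift_eq_tsum, (summable_cantorShift hq hε n).tsum_eq_zero_add, tsum_congr htail,
    tsum_div_const, cantorShift_eq_tsum, add_div, zero_add, cantorProd.succ', cantorProd.zero,
    mul_one]

lemma cantorShift_eq_of_digit_eq_mul {c : ℝ} (hq : ∀ k, 1 ≤ k → 2 ≤ q k)
    (hε : ∀ k, 1 ≤ k → (ε k : ℝ) = c * ((q k : ℝ) - 1)) (n : ℕ) :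
    cantorShift q ε n = c := by
  rw [cantorShift_eq_tsum]
  calc ∑' k, (ε (n + k + 1) : ℝ) / cantorProd q n (k + 1)
      = ∑' k, c * (((q (n + k + 1) : ℝ) - 1) / cantorProd q n (k + 1)) :=
        tsum_congr fun k ↦ by rw [hε _ (by omega), mul_div_assoc]
    _ = c := by simpa using ((hasSum_sub_one_div_cantorProd hq n).mul_left c).tsum_eq

lemma mul_sub_one_eq_iff_cast_eq {Q e a b : ℕ} (hQ : 2 ≤ Q) (hb : 1 ≤ b) :
    a * (Q - 1) = (b - 1) * e ↔ (a : ℝ) = e / ((Q : ℝ) - 1) * ((b : ℝ) - 1) := by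
  have hQ' : (Q : ℝ) - 1 ≠ 0 := by
    have : (2 : ℝ) ≤ Q := by exact_mod_cast hQ
    linarith
  rw [← Nat.cast_inj (R := ℝ), div_mul_eq_mul_div, eq_div_iff hQ']
  push_cast [Nat.cast_sub hb, Nat.cast_sub (one_le_two.trans hQ)]
  constructor <;> intro h <;> linarith

theorem cantor_shift_fixed_iff_digits_general
    (q : ℕ → ℕ) (hq : ∀ k, 1 ≤ k → 2 ≤ q k)
    (ε : ℕ → ℕ) (hε : ∀ k, 1 ≤ k → ε k ≤ q k - 1)
    (Q : ℕ) (hQ : IsLeast {m : ℕ | ∃ n : ℕ, 1 ≤ n ∧ q n = m} Q)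
    (e : ℕ) :
    (∀ n : ℕ, cantorShift q ε n = (e : ℝ) / ((Q : ℝ) - 1)) ↔
    (∀ n : ℕ, 1 ≤ n → ε n * (Q - 1) = (q n - 1) * e) := by
  have hQ2 : 2 ≤ Q := by
    obtain ⟨n, hn, rfl⟩ := hQ.1
    exact hq n hn
  have hdigit (n : ℕ) (hn : 1 ≤ n) :=
    mul_sub_one_eq_iff_cast_eq (a := ε n) (e := e) hQ2 ((hq n hn).trans' one_le_two)
  constructor
  · intro h n hn
    obtain ⟨m, rfl⟩ := Nat.exists_eq_add_of_le' hn
    have hrec := cantorShift_eq_add_div hq hε m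
    have hqm : (q (m + 1) : ℝ) ≠ 0 := by have := hq (m + 1) hn; positivity
    rw [h, h, eq_div_iff hqm] at hrec
    rw [hdigit _ hn]
    linarith
  · exact fun h ↦ cantorShift_eq_of_digit_eq_mul hq fun k hk ↦ (hdigit k hk).1 (h k hk)

/-- with `Q = min {q_n : n ≥ 1}` and a fixed `e ∈ {0, …, Q−1}`, the digit
sequence `(ε_k)` satisfies `σ^n(x) = x = e/(Q−1)` for all `n ≥ 0` iff
`ε_n·(Q−1) = (q_n−1)·e` for every `n ≥ 1`. -/
theorem cantor_shift_fixed_iff_digits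
    (q : ℕ → ℕ) (hq : ∀ k, 1 ≤ k → 2 ≤ q k)
    (ε : ℕ → ℕ) (hε : ∀ k, 1 ≤ k → ε k ≤ q k - 1)
    (Q : ℕ) (hQ : IsLeast {m : ℕ | ∃ n : ℕ, 1 ≤ n ∧ q n = m} Q)
    (e : ℕ) (he : e ≤ Q - 1) :
    (∀ n : ℕ, cantorShift q ε n = (e : ℝ) / ((Q : ℝ) - 1)) ↔
    (∀ n : ℕ, 1 ≤ n → ε n * (Q - 1) = (q n - 1) * e) :=
  cantor_shift_fixed_iff_digits_general q hq ε hε Q hQ e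
end
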